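/- (Pourciau-type extension to pseudoconvexity.) Let x̂ solve: minimize f_0 over x ∈ Ω with f_i(x) ≤ 0, i = 1,…,m. Assume F = (f_0,…,f_m) is D^+_M-pseudoconvex at x̂ and each f_j with f_j(x̂) < 0 is upper semicontinuous at x̂. Then there exists a nonzero (λ^0,…,λ^m) with λ^i ≥ 0, λ^i f_i(x̂) = 0 for i = 1,…,m, and setting f = Σ_{i=0}^m λ^i f_i, one has λ^0 f_0(x̂) = f(x̂) ≤ f(x) for all x ∈ Ω. -/

import Mathlib

open Filter Topology

variable {E : Type*} [NormedAddCommGroup E] [NormedSpace ℝ E]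

/-- Difference quotient of `f` at `x` in direction `u`. -/
noncomputable def diniQuot (f : E → ℝ) (x u : E) : ℝ → ℝ :=
  fun t => (f (x + t • u) - f x) / t

/-- Lower Dini derivative `D⁻ f(x)(u)`. -/
noncomputable def lowerDini (f : E → ℝ) (x u : E) : ℝ :=
  liminf (diniQuot f x u) (𝓝[>] 0)

/-- Upper Dini derivative `D⁺ f(x)(u)`. -/
noncomputable def upperDini (f : E → ℝ) (x u : E) : ℝ :=
  limsup (diniQuot f x u) (𝓝[>] 0)

/-- Modified lower Dini derivative `D⁻_M f(x)(u)`. -/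
noncomputable def lowerDiniM (f : E → ℝ) (x u : E) : ℝ :=
  ⨅ w : E, (lowerDini f x (u + w) - lowerDini f x w)

/-- Modified upper Dini derivative `D⁺_M f(x)(u)`. -/
noncomputable def upperDiniM (f : E → ℝ) (x u : E) : ℝ :=
  ⨆ w : E, (upperDini f x (u + w) - upperDini f x w)

/-- The difference quotients of `f` at `x` in direction `u` are bounded near `0⁺`,
so that the lower/upper Dini derivatives are genuine (finite) values. -/
def DiniFinite (f : E → ℝ) (x u : E) : Prop :=
  IsBoundedUnder (· ≤ ·) (𝓝[>] (0:ℝ)) (diniQuot f x u) ∧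
  IsBoundedUnder (· ≥ ·) (𝓝[>] (0:ℝ)) (diniQuot f x u)

/-- Finiteness of the modified lower Dini derivative. -/
def LowerDiniMFinite (f : E → ℝ) (x u : E) : Prop :=
  BddBelow (Set.range fun w : E => lowerDini f x (u + w) - lowerDini f x w)

/-- Finiteness of the modified upper Dini derivative. -/
def UpperDiniMFinite (f : E → ℝ) (x u : E) : Prop :=
  BddAbove (Set.range fun w : E => upperDini f x (u + w) - upperDini f x w)

/-!
At a minimizer `x̂` no direction `u` makes `D⁺_M f_i(x̂)(u)` negative for the objective and all
active constraints at once: `D⁺_M ≥ D⁺` would make `t ↦ f_i(x̂ + t u)` decrease for small `t > 0`,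
while the inactive constraints stay negative by upper semicontinuity, contradicting minimality.
Each `D⁺_M f_i(x̂)` is sublinear, hence convex, so the Fan–Glicksberg–Hoffman alternative
(separate `0` from the open convex set of vectors strictly dominating some
`(D⁺_M f_i(x̂)(u))_i` on the active indices) yields multipliers `λ ≥ 0`, `λ ≠ 0`, vanishing on
inactive constraints, with `∑ λ_i D⁺_M f_i(x̂)(u) ≥ 0` for every `u`. Pseudoconvexity with
`w = λ`, `u = η(x, x̂)` turns this into `∑ λ_i f_i(x̂) ≤ ∑ λ_i f_i(x)`.
-/

theorem nonneg_of_forall_nonneg_add_mul {a b : ℝ} (h : ∀ t : ℝ, 0 ≤ t → 0 ≤ a + t * b) :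
    0 ≤ b := by
  by_contra! hb
  have ha : 0 ≤ a := by simpa using h 0 le_rfl
  have key : (a + 1) / -b * b = -(a + 1) := by field_simp [hb.ne]
  linarith [h ((a + 1) / -b) (div_nonneg (by linarith) (by linarith))]

theorem eq_zero_of_forall_nonneg_add_mul {a b : ℝ} (h : ∀ t : ℝ, 0 ≤ a + t * b) : b = 0 := by
  have h₁ := nonneg_of_forall_nonneg_add_mul (b := b) fun t _ => h t
  have h₂ := nonneg_of_forall_nonneg_add_mul (b := -b) fun t _ => by simpa using h (-t)
  linarith

theorem tendsto_add_smul_nhdsGT_zero {V : Type*} [AddCommGroup V] [TopologicalSpace V]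
    [IsTopologicalAddGroup V] [Module ℝ V] [ContinuousSMul ℝ V] (x u : V) :
    Tendsto (fun t : ℝ => x + t • u) (𝓝[>] 0) (𝓝 x) := by
  have hcont : Continuous fun t : ℝ => x + t • u := by fun_prop
  simpa using (hcont.tendsto 0).mono_left nhdsWithin_le_nhds

section Alternative

variable {ι V : Type*} {s : Set ι} {g : ι → V → ℝ}

theorem convex_setOf_exists_forall_lt [AddCommGroup V] [Module ℝ V]
    (hg : ∀ i ∈ s, ConvexOn ℝ Set.univ (g i)) :
    Convex ℝ {y : ι → ℝ | ∃ u, ∀ i ∈ s, g i u < y i} := by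
  rintro y ⟨u, hu⟩ z ⟨v, hv⟩ a b ha hb hab
  refine ⟨a • u + b • v, fun i hi => ?_⟩
  have hconv : g i (a • u + b • v) ≤ a * g i u + b * g i v :=
    (hg i hi).2 trivial trivial ha hb hab
  have hu' := hu i hi
  have hv' := hv i hi
  simp only [Pi.add_apply, Pi.smul_apply, smul_eq_mul]
  rcases ha.eq_or_lt with rfl | ha'
  · obtain rfl : b = 1 := by linarith
    linarith
  · nlinarith [mul_lt_mul_of_pos_left hu' ha', mul_le_mul_of_nonneg_left hv'.le hb]

theorem isOpen_setOf_exists_forall_lt [Finite ι] :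
    IsOpen {y : ι → ℝ | ∃ u, ∀ i ∈ s, g i u < y i} := by
  simp only [Set.ofPred_exists, Set.ofPred_forall]
  exact isOpen_iUnion fun u =>
    s.toFinite.isOpen_biInter fun i _ => isOpen_lt continuous_const (continuous_apply i)

theorem mem_closure_setOf_exists_forall_lt {y : ι → ℝ} {u : V} (hu : ∀ i ∈ s, g i u ≤ y i) :
    y ∈ closure {y : ι → ℝ | ∃ u, ∀ i ∈ s, g i u < y i} := by
  refine mem_closure_of_tendsto (tendsto_add_smul_nhdsGT_zero y 1) ?_
  filter_upwards [self_mem_nhdsWithin] with t (ht : 0 < t)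
  exact ⟨u, fun i hi => by simpa using add_lt_add_of_le_of_lt (hu i hi) ht⟩

theorem fan_glicksberg_hoffman [Fintype ι] [AddCommGroup V] [Module ℝ V]
    (hg : ∀ i ∈ s, ConvexOn ℝ Set.univ (g i))
    (h : ¬ ∃ u, ∀ i ∈ s, g i u < 0) :
    ∃ lam : ι → ℝ, (∀ i, 0 ≤ lam i) ∧ lam ≠ 0 ∧ (∀ i ∉ s, lam i = 0) ∧
      ∀ u, 0 ≤ ∑ i, lam i * g i u := by
  classical
  obtain ⟨φ, hφ⟩ := geometric_hahn_banach_point_open (x := 0)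
    (convex_setOf_exists_forall_lt hg) isOpen_setOf_exists_forall_lt fun ⟨u, hu⟩ => h ⟨u, hu⟩
  have hφC : ∀ y u, (∀ i ∈ s, g i u ≤ y i) → 0 ≤ φ y := fun y u hu =>
    closure_minimal (fun z hz => by simpa using (hφ z hz).le)
      (isClosed_le continuous_const φ.continuous) (mem_closure_setOf_exists_forall_lt hu)
  set e : ι → ι → ℝ := fun i j => if i = j then 1 else 0
  set lam : ι → ℝ := fun i => φ (e i)
  have hφ_eq : ∀ y, φ y = ∑ i, lam i * y i := fun y => by
    simpa [mul_comm] using LinearMap.pi_apply_eq_sum_univ (φ : (ι → ℝ) →ₗ[ℝ] ℝ) y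
  have hshift : ∀ i t, (i ∈ s → 0 ≤ t) → 0 ≤ φ (fun j => g j 0) + t * lam i := by
    intro i t ht
    have hmem : ∀ j ∈ s, g j 0 ≤ ((fun j => g j 0) + t • e i) j := fun j hj => by
      by_cases hij : i = j
      · subst hij; simpa [e] using ht hj
      · simp [e, hij]
    simpa [lam] using hφC _ 0 hmem
  refine ⟨lam, fun i => nonneg_of_forall_nonneg_add_mul fun t ht => hshift i t fun _ => ht,
    fun hlam => ?_, fun i hi => eq_zero_of_forall_nonneg_add_mul fun t =>
      hshift i t fun h => absurd h hi, fun u => ?_⟩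
  · have := hφ ((fun j => g j 0) + 1) ⟨0, fun i _ => by simp⟩
    simp [hφ_eq, hlam] at this
  · simpa [hφ_eq, mul_comm] using hφC (fun j => g j u) u fun _ _ => le_rfl

end Alternative

theorem map_const_mul_nhdsGT_zero {a : ℝ} (ha : 0 < a) :
    map (a * ·) (𝓝[>] (0 : ℝ)) = 𝓝[>] 0 := by
  have h := (Homeomorph.mulLeft₀ a ha.ne').isEmbedding.map_nhdsWithin_eq (Set.Ioi 0) 0
  simpa [Homeomorph.coe_mulLeft₀, Set.image_const_mul_Ioi_zero ha] using h

section Dini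

variable {f : E → ℝ} {x : E}

theorem upperDini_zero : upperDini f x 0 = 0 := by
  have h : diniQuot f x 0 = fun _ => 0 := by
    funext t
    simp [diniQuot]
  rw [upperDini, h, limsup_const]

theorem diniQuot_smul (u : E) {a : ℝ} (ha : 0 < a) :
    diniQuot f x (a • u) = fun t => a * diniQuot f x u (a * t) := by
  funext t
  rcases eq_or_ne t 0 with rfl | ht
  · simp [diniQuot]
  · simp only [diniQuot, smul_smul, mul_comm t a]
    field_simp

theorem upperDini_smul {u : E} {a : ℝ} (ha : 0 < a) (hD : DiniFinite f x u) :
    upperDini f x (a • u) = a * upperDini f x u := by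
  have hlim : limsup (diniQuot f x (a • u)) (𝓝[>] 0)
      = limsup (fun s => a * diniQuot f x u s) (map (a * ·) (𝓝[>] 0)) := by
    rw [diniQuot_smul u ha]
    simp only [limsup, map_map]
    rfl
  have hmono : Monotone (a * · : ℝ → ℝ) := fun _ _ h => mul_le_mul_of_nonneg_left h ha.le
  rw [upperDini, hlim, map_const_mul_nhdsGT_zero ha]
  exact (hmono.map_limsup_of_continuousAt (diniQuot f x u) (by fun_prop) hD.1
    hD.2.isCoboundedUnder_le).symm

theorem upperDiniM_zero : upperDiniM f x 0 = 0 := by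
  simp [upperDiniM]

theorem le_upperDiniM {u : E} (h : UpperDiniMFinite f x u) (w : E) :
    upperDini f x (u + w) - upperDini f x w ≤ upperDiniM f x u :=
  le_ciSup h w

theorem upperDini_le_upperDiniM {u : E} (h : UpperDiniMFinite f x u) :
    upperDini f x u ≤ upperDiniM f x u := by
  simpa [upperDini_zero] using le_upperDiniM h 0

theorem upperDiniM_add_le {u v : E} (hu : UpperDiniMFinite f x u) (hv : UpperDiniMFinite f x v) :
    upperDiniM f x (u + v) ≤ upperDiniM f x u + upperDiniM f x v := by
  refine ciSup_le fun w => ?_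
  have h₁ := le_upperDiniM hu (v + w)
  have h₂ := le_upperDiniM hv w
  rw [add_assoc]
  linarith

theorem upperDiniM_smul_le (u : E) {a : ℝ} (ha : 0 ≤ a) (hD : ∀ v, DiniFinite f x v)
    (hM : UpperDiniMFinite f x u) :
    upperDiniM f x (a • u) ≤ a * upperDiniM f x u := by
  rcases ha.eq_or_lt with rfl | ha
  · simp [upperDiniM_zero]
  refine ciSup_le fun w => ?_
  have hw : w = a • (a⁻¹ • w) := by rw [smul_smul, mul_inv_cancel₀ ha.ne', one_smul]
  rw [hw, ← smul_add, upperDini_smul ha (hD _), upperDini_smul ha (hD _), ← mul_sub]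
  exact mul_le_mul_of_nonneg_left (le_upperDiniM hM _) ha.le

theorem convexOn_upperDiniM (hD : ∀ v, DiniFinite f x v) (hM : ∀ v, UpperDiniMFinite f x v) :
    ConvexOn ℝ Set.univ (upperDiniM f x) :=
  ⟨convex_univ, fun u _ v _ _ _ ha hb _ =>
    (upperDiniM_add_le (hM _) (hM _)).trans
      (add_le_add (upperDiniM_smul_le u ha hD (hM u)) (upperDiniM_smul_le v hb hD (hM v)))⟩

theorem eventually_lt_of_upperDini_neg {u : E}
    (hb : IsBoundedUnder (· ≤ ·) (𝓝[>] (0 : ℝ)) (diniQuot f x u)) (h : upperDini f x u < 0) :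
    ∀ᶠ t in 𝓝[>] (0 : ℝ), f (x + t • u) < f x := by
  filter_upwards [eventually_lt_of_limsup_lt h hb, self_mem_nhdsWithin] with t hq (ht : 0 < t)
  have := (div_lt_iff₀ ht).1 hq
  simp only [zero_mul] at this
  linarith

end Dini

theorem not_exists_forall_upperDini_neg_of_minimizer {m : ℕ} {Ω : Set E} (hΩ : IsOpen Ω)
    {f : Fin (m + 1) → E → ℝ} {xh : E} (hx : xh ∈ Ω)
    (hfeas : ∀ i : Fin (m + 1), i ≠ 0 → f i xh ≤ 0)
    (hmin : ∀ x ∈ Ω, (∀ i : Fin (m + 1), i ≠ 0 → f i x ≤ 0) → f 0 xh ≤ f 0 x)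
    (husc : ∀ i : Fin (m + 1), i ≠ 0 → f i xh < 0 → UpperSemicontinuousAt (f i) xh)
    (hfin : ∀ i u, IsBoundedUnder (· ≤ ·) (𝓝[>] (0 : ℝ)) (diniQuot (f i) xh u)) :
    ¬ ∃ u, ∀ i ∈ {i | i = 0 ∨ f i xh = 0}, upperDini (f i) xh u < 0 := by
  rintro ⟨u, hu⟩
  have hpath := tendsto_add_smul_nhdsGT_zero xh u
  have hcon : ∀ i, i ≠ 0 → ∀ᶠ t in 𝓝[>] (0 : ℝ), f i (xh + t • u) ≤ 0 := by
    intro i hi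
    rcases (hfeas i hi).eq_or_lt with hact | hinact
    · filter_upwards [eventually_lt_of_upperDini_neg (hfin i u) (hu i (Or.inr hact))] with t ht
      linarith
    · filter_upwards [hpath.eventually (husc i hi hinact 0 hinact)] with t ht using ht.le
  have hobj := eventually_lt_of_upperDini_neg (hfin 0 u) (hu 0 (Or.inl rfl))
  obtain ⟨t, hlt, hfeas_t, hΩt⟩ := (hobj.and ((eventually_all.2 fun i =>
    eventually_imp_distrib_left.2 (hcon i)).and (hpath.eventually (hΩ.mem_nhds hx)))).exists
  exact (hmin _ hΩt hfeas_t).not_gt hlt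

theorem pourciau_pseudoconvex_general (m : ℕ) (Ω : Set E) (hΩ : IsOpen Ω)
    (f : Fin (m + 1) → E → ℝ) (xh : E) (hx : xh ∈ Ω)
    (hfeas : ∀ i : Fin (m + 1), i ≠ 0 → f i xh ≤ 0)
    (hmin : ∀ x ∈ Ω, (∀ i : Fin (m + 1), i ≠ 0 → f i x ≤ 0) → f 0 xh ≤ f 0 x)
    (husc : ∀ i : Fin (m + 1), i ≠ 0 → f i xh < 0 → UpperSemicontinuousAt (f i) xh)
    (hfin : ∀ i u, DiniFinite (f i) xh u)
    (hMfin : ∀ i u, UpperDiniMFinite (f i) xh u)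
    (hpc : ∀ x ∈ Ω, ∃ η : E, ∀ w : Fin (m + 1) → ℝ, (∀ i, 0 ≤ w i) →
      0 ≤ ∑ i, w i * upperDiniM (f i) xh η → 0 ≤ ∑ i, w i * (f i x - f i xh)) :
    ∃ lam : Fin (m + 1) → ℝ,
      (∀ i, 0 ≤ lam i) ∧ lam ≠ 0 ∧
      (∀ i : Fin (m + 1), i ≠ 0 → lam i * f i xh = 0) ∧
      lam 0 * f 0 xh = ∑ i, lam i * f i xh ∧
      ∀ x ∈ Ω, ∑ i, lam i * f i xh ≤ ∑ i, lam i * f i x := by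
  have hdesc : ¬ ∃ u, ∀ i ∈ {i | i = 0 ∨ f i xh = 0}, upperDiniM (f i) xh u < 0 :=
    fun ⟨u, hu⟩ => not_exists_forall_upperDini_neg_of_minimizer hΩ hx hfeas hmin husc
      (fun i u => (hfin i u).1)
      ⟨u, fun i hi => (upperDini_le_upperDiniM (hMfin i u)).trans_lt (hu i hi)⟩
  obtain ⟨lam, hlam, hne, hsupp, hsum⟩ :=
    fan_glicksberg_hoffman (fun i _ => convexOn_upperDiniM (hfin i) (hMfin i)) hdesc
  have hslack : ∀ i : Fin (m + 1), i ≠ 0 → lam i * f i xh = 0 := fun i hi => by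
    by_cases hact : f i xh = 0
    · rw [hact, mul_zero]
    · rw [hsupp i (by simp [hi, hact]), zero_mul]
  refine ⟨lam, hlam, hne, hslack,
    (Finset.sum_eq_single 0 (fun i _ hi => hslack i hi) (by simp)).symm, fun x hxΩ => ?_⟩
  obtain ⟨η, hη⟩ := hpc x hxΩ
  simpa only [mul_sub, Finset.sum_sub_distrib, sub_nonneg] using hη lam hlam (hsum η)

/-- Pourciau-type extension to pseudoconvexity: if `xh` solves
the minimization problem, `F = (f 0, …, f m)` is `D⁺_M`-pseudoconvex at `xh`
and the inactive constraints are upper semicontinuous at `xh`, then there is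
a nonzero nonnegative multiplier vector `lam` with complementary slackness
such that `f := ∑ i, lam i * f i` satisfies
`lam 0 * f 0 xh = f xh ≤ f x` for every `x ∈ Ω`. -/
theorem pourciau_pseudoconvex (m : ℕ) (Ω : Set E) (hΩ : IsOpen Ω) (hΩne : Ω.Nonempty)
    (f : Fin (m + 1) → E → ℝ) (xh : E) (hx : xh ∈ Ω)
    (hfeas : ∀ i : Fin (m + 1), i ≠ 0 → f i xh ≤ 0)
    (hmin : ∀ x ∈ Ω, (∀ i : Fin (m + 1), i ≠ 0 → f i x ≤ 0) → f 0 xh ≤ f 0 x)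
    (husc : ∀ i : Fin (m + 1), i ≠ 0 → f i xh < 0 → UpperSemicontinuousAt (f i) xh)
    (hfin : ∀ i u, DiniFinite (f i) xh u)
    (hMfin : ∀ i u, UpperDiniMFinite (f i) xh u)
    (hpc : ∀ x ∈ Ω, ∃ η : E, ∀ w : Fin (m + 1) → ℝ, (∀ i, 0 ≤ w i) →
      0 ≤ ∑ i, w i * upperDiniM (f i) xh η → 0 ≤ ∑ i, w i * (f i x - f i xh)) :
    ∃ lam : Fin (m + 1) → ℝ,
      (∀ i, 0 ≤ lam i) ∧ lam ≠ 0 ∧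
      (∀ i : Fin (m + 1), i ≠ 0 → lam i * f i xh = 0) ∧
      lam 0 * f 0 xh = ∑ i, lam i * f i xh ∧
      ∀ x ∈ Ω, ∑ i, lam i * f i xh ≤ ∑ i, lam i * f i x :=
  pourciau_pseudoconvex_general m Ω hΩ f xh hx hfeas hmin husc hfin hMfin hpc
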